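/- Let y and y′ be involutions of B̄(B̃_n) whose labelled cycle types both have k_e = 0 and l = 0. Then y and y′ are conjugate in B̄(B̃_n) if and only if they have the same labelled cycle type and f(y) + minus(y) ≡ f(y′) + minus(y′) (mod 4). -/

import Mathlib

noncomputable section

open Equiv Finset

/-- Points `±1, …, ±n`, encoded as a sign together with an index. -/
abbrev Pt (n : ℕ) := ℤˣ × Fin n

/-- Negation of a point. -/
def negPt {n : ℕ} (x : Pt n) : Pt n := (-x.1, x.2)

/-- The hyperoctahedral group `H_n` of signed permutations: bijections `σ` of `{±1,…,±n}`
with `σ(-i) = -σ(i)`. -/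
def Hgrp (n : ℕ) : Subgroup (Equiv.Perm (Pt n)) where
  carrier := {σ | ∀ x, σ (negPt x) = negPt (σ x)}
  one_mem' := fun _ => rfl
  mul_mem' := by
    intro σ τ hσ hτ x
    have hσ' : ∀ y, σ (negPt y) = negPt (σ y) := hσ
    have hτ' : ∀ y, τ (negPt y) = negPt (τ y) := hτ
    simp only [Equiv.Perm.mul_apply]
    rw [hτ' x, hσ' (τ x)]
  inv_mem' := by
    intro σ hσ x
    have hσ' : ∀ y, σ (negPt y) = negPt (σ y) := hσ
    apply σ.injective
    rw [hσ']; simp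

lemma Hgrp_apply {n : ℕ} {σ : Equiv.Perm (Pt n)} (hσ : σ ∈ Hgrp n) (δ : ℤˣ) (k : Fin n) :
    σ (δ, k) = (δ * (σ (1, k)).1, (σ (1, k)).2) := by
  have hσ' : ∀ y, σ (negPt y) = negPt (σ y) := hσ
  rcases Int.units_eq_one_or δ with h | h <;> subst h
  · simp
  · have h2 := hσ' (1, k)
    simp only [negPt] at h2
    simpa using h2

/-- The (right) action of a signed permutation on integer vectors:
`(v^σ)_j = ε·v_i` whenever `σ(i) = ε j`. -/
def actV {n : ℕ} (σ : Equiv.Perm (Pt n)) (v : Fin n → ℤ) : Fin n → ℤ :=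
  fun j => ((σ (1, j)).1 : ℤ) * v (σ (1, j)).2

lemma actV_add {n : ℕ} (σ : Equiv.Perm (Pt n)) (a b : Fin n → ℤ) :
    actV σ (a + b) = actV σ a + actV σ b := by
  funext j; simp [actV, mul_add]

lemma actV_zero {n : ℕ} (σ : Equiv.Perm (Pt n)) : actV σ 0 = 0 := by
  funext j; simp [actV]

lemma actV_neg {n : ℕ} (σ : Equiv.Perm (Pt n)) (v : Fin n → ℤ) :
    actV σ (-v) = -actV σ v := by
  funext j; simp [actV]

lemma actV_one {n : ℕ} (v : Fin n → ℤ) : actV 1 v = v := by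
  funext j; simp [actV]

lemma actV_mul {n : ℕ} {σ : Equiv.Perm (Pt n)} (hσ : σ ∈ Hgrp n) (τ : Equiv.Perm (Pt n))
    (v : Fin n → ℤ) : actV (σ * τ) v = actV τ (actV σ v) := by
  funext j
  have h := Hgrp_apply hσ (τ (1, j)).1 (τ (1, j)).2
  rw [Prod.mk.eta] at h
  simp only [actV, Equiv.Perm.mul_apply, h]
  push_cast
  ring

/-- The affine Weyl group of type `C̃ₙ`: pairs `(σ, v)` with `σ` a signed permutation and
`v ∈ ℤⁿ`, with multiplication `(σ,v)(τ,u) = (στ, v^τ + u)`. -/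
@[ext] structure WC (n : ℕ) where
  sigma : Hgrp n
  vec : Fin n → ℤ

namespace WC

variable {n : ℕ}

instance : Mul (WC n) :=
  ⟨fun x y => ⟨x.sigma * y.sigma, actV (y.sigma : Equiv.Perm (Pt n)) x.vec + y.vec⟩⟩

instance : One (WC n) := ⟨⟨1, 0⟩⟩

instance : Inv (WC n) :=
  ⟨fun x => ⟨x.sigma⁻¹, -actV ((x.sigma⁻¹ : Hgrp n) : Equiv.Perm (Pt n)) x.vec⟩⟩

@[simp] lemma mul_sigma (x y : WC n) : (x * y).sigma = x.sigma * y.sigma := rfl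
@[simp] lemma mul_vec (x y : WC n) :
    (x * y).vec = actV (y.sigma : Equiv.Perm (Pt n)) x.vec + y.vec := rfl
@[simp] lemma one_sigma : (1 : WC n).sigma = 1 := rfl
@[simp] lemma one_vec : (1 : WC n).vec = 0 := rfl
@[simp] lemma inv_sigma (x : WC n) : (x⁻¹).sigma = x.sigma⁻¹ := rfl
@[simp] lemma inv_vec (x : WC n) :
    (x⁻¹).vec = -actV ((x.sigma⁻¹ : Hgrp n) : Equiv.Perm (Pt n)) x.vec := rfl

instance : Group (WC n) where
  mul_assoc a b c := by
    refine WC.ext ?_ ?_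
    · exact mul_assoc _ _ _
    · show actV (c.sigma : Equiv.Perm (Pt n))
          (actV (b.sigma : Equiv.Perm (Pt n)) a.vec + b.vec) + c.vec
        = actV (((b.sigma * c.sigma : Hgrp n)) : Equiv.Perm (Pt n)) a.vec
          + (actV (c.sigma : Equiv.Perm (Pt n)) b.vec + c.vec)
      rw [actV_add]
      have hc : (((b.sigma * c.sigma : Hgrp n)) : Equiv.Perm (Pt n))
          = (b.sigma : Equiv.Perm (Pt n)) * (c.sigma : Equiv.Perm (Pt n)) := rfl
      rw [hc, actV_mul b.sigma.2]
      abel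
  one_mul a := by
    refine WC.ext (one_mul _) ?_
    show actV (a.sigma : Equiv.Perm (Pt n)) 0 + a.vec = a.vec
    rw [actV_zero, zero_add]
  mul_one a := by
    refine WC.ext (mul_one _) ?_
    show actV ((1 : Hgrp n) : Equiv.Perm (Pt n)) a.vec + 0 = a.vec
    have h1 : ((1 : Hgrp n) : Equiv.Perm (Pt n)) = 1 := rfl
    rw [h1, actV_one, add_zero]
  inv_mul_cancel a := by
    refine WC.ext (inv_mul_cancel _) ?_
    show actV (a.sigma : Equiv.Perm (Pt n))
        (-actV ((a.sigma⁻¹ : Hgrp n) : Equiv.Perm (Pt n)) a.vec) + a.vec = 0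
    rw [actV_neg, ← actV_mul (a.sigma⁻¹ : Hgrp n).2]
    have h1 : ((a.sigma⁻¹ : Hgrp n) : Equiv.Perm (Pt n)) * (a.sigma : Equiv.Perm (Pt n)) = 1 := by
      rw [← Subgroup.coe_mul, inv_mul_cancel, Subgroup.coe_one]
    rw [h1, actV_one, neg_add_cancel]

end WC

/-- `Σw`: the coordinate sum of the translation part. -/
def sumV {n : ℕ} (x : WC n) : ℤ := ∑ i, x.vec i

/-- `minus(w)`: the number of `i ∈ {1,…,n}` with `σ(i) < 0`. -/
def minusCard {n : ℕ} (x : WC n) : ℕ :=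
  (Finset.univ.filter fun i : Fin n => ((x.sigma : Equiv.Perm (Pt n)) (1, i)).1 = -1).card
lemma permOf_bij {n : ℕ} (σ : Hgrp n) :
    Function.Bijective (fun i : Fin n => ((σ : Equiv.Perm (Pt n)) (1, i)).2) := by
  rw [Fintype.bijective_iff_injective_and_card]
  refine ⟨?_, rfl⟩
  intro i j hij
  simp only at hij
  have hmem : ∀ y, (σ : Equiv.Perm (Pt n)) (negPt y) = negPt ((σ : Equiv.Perm (Pt n)) y) := σ.2
  by_cases h1 : ((σ : Equiv.Perm (Pt n)) (1, i)).1 = ((σ : Equiv.Perm (Pt n)) (1, j)).1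
  · have heq : (σ : Equiv.Perm (Pt n)) (1, i) = (σ : Equiv.Perm (Pt n)) (1, j) :=
      Prod.ext h1 hij
    have h2 := (σ : Equiv.Perm (Pt n)).injective heq
    exact congrArg Prod.snd h2
  · exfalso
    have hfst : ((σ : Equiv.Perm (Pt n)) (1, i)).1 = -((σ : Equiv.Perm (Pt n)) (1, j)).1 := by
      rcases Int.units_eq_one_or ((σ : Equiv.Perm (Pt n)) (1, i)).1 with ha | ha <;>
        rcases Int.units_eq_one_or ((σ : Equiv.Perm (Pt n)) (1, j)).1 with hb | hb <;>
        first
          | exact absurd (ha.trans hb.symm) h1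
          | simp [ha, hb]
    have hne : (σ : Equiv.Perm (Pt n)) (1, i) = negPt ((σ : Equiv.Perm (Pt n)) (1, j)) :=
      Prod.ext hfst hij
    rw [← hmem (1, j)] at hne
    have h3 := (σ : Equiv.Perm (Pt n)).injective hne
    have h4 := congrArg Prod.fst h3
    simp only [negPt] at h4
    exact absurd h4 (by decide)

/-- The underlying (unsigned) permutation of `{1,…,n}` induced by a signed permutation. -/
def permOf {n : ℕ} (σ : Hgrp n) : Equiv.Perm (Fin n) :=
  Equiv.ofBijective _ (permOf_bij σ)

@[simp] lemma permOf_apply {n : ℕ} (σ : Hgrp n) (i : Fin n) :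
    permOf σ i = ((σ : Equiv.Perm (Pt n)) (1, i)).2 := rfl

lemma unitsCast_zmod2 (ε : ℤˣ) : (((ε : ℤ) : ZMod 2)) = 1 := by
  rcases Int.units_eq_one_or ε with h | h <;> subst h <;> decide

lemma sumV_mul {n : ℕ} (x y : WC n) :
    ((sumV (x * y) : ℤ) : ZMod 2) = ((sumV x : ℤ) : ZMod 2) + ((sumV y : ℤ) : ZMod 2) := by
  have key : ∀ (σ : Hgrp n) (v : Fin n → ℤ),
      (∑ i, ((actV (σ : Equiv.Perm (Pt n)) v i : ℤ) : ZMod 2)) = ∑ i, ((v i : ℤ) : ZMod 2) := by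
    intro σ v
    have hterm : ∀ i, ((actV (σ : Equiv.Perm (Pt n)) v i : ℤ) : ZMod 2)
        = ((v (permOf σ i) : ℤ) : ZMod 2) := by
      intro i
      show ((((((σ : Equiv.Perm (Pt n)) (1, i)).1 : ℤ)) * v (((σ : Equiv.Perm (Pt n)) (1, i)).2) : ℤ) : ZMod 2) = _
      push_cast
      rw [unitsCast_zmod2, one_mul]
      rfl
    rw [Finset.sum_congr rfl (fun i _ => hterm i)]
    exact Equiv.sum_comp (permOf σ) (fun i => ((v i : ℤ) : ZMod 2))
  have hvec : (x * y).vec = actV (y.sigma : Equiv.Perm (Pt n)) x.vec + y.vec := rfl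
  unfold sumV
  rw [hvec]
  have hsplit : (∑ i, (actV (y.sigma : Equiv.Perm (Pt n)) x.vec + y.vec) i)
      = (∑ i, actV (y.sigma : Equiv.Perm (Pt n)) x.vec i) + ∑ i, y.vec i := by
    rw [← Finset.sum_add_distrib]; rfl
  rw [hsplit]
  push_cast
  rw [key y.sigma x.vec]

lemma minusCard_one {n : ℕ} : minusCard (1 : WC n) = 0 := by
  unfold minusCard
  rw [Finset.card_eq_zero, Finset.filter_eq_empty_iff]
  intro i _
  show ¬ (((1 : Hgrp n) : Equiv.Perm (Pt n)) (1, i)).1 = -1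
  simp only [OneMemClass.coe_one, Equiv.Perm.one_apply]
  decide

lemma ite_units_mul (u w : ℤˣ) :
    ((if u * w = -1 then (1 : ZMod 2) else 0)) =
      (if u = -1 then (1 : ZMod 2) else 0) + (if w = -1 then (1 : ZMod 2) else 0) := by
  rcases Int.units_eq_one_or u with h | h <;> rcases Int.units_eq_one_or w with h' | h' <;>
    subst h <;> subst h' <;> decide

lemma minusCard_mul {n : ℕ} (x y : WC n) :
    ((minusCard (x * y) : ℕ) : ZMod 2) = (minusCard x : ZMod 2) + (minusCard y : ZMod 2) := by
  have hσ : ∀ i : Fin n, ((x * y).sigma : Equiv.Perm (Pt n)) (1, i)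
      = (x.sigma : Equiv.Perm (Pt n)) ((y.sigma : Equiv.Perm (Pt n)) (1, i)) := fun i => rfl
  unfold minusCard
  rw [Finset.card_filter, Finset.card_filter, Finset.card_filter]
  push_cast
  have step : ∀ i : Fin n,
      ((if (((x * y).sigma : Equiv.Perm (Pt n)) (1, i)).1 = -1 then (1 : ZMod 2) else 0))
      = (if ((y.sigma : Equiv.Perm (Pt n)) (1, i)).1 = -1 then (1 : ZMod 2) else 0)
        + (if ((x.sigma : Equiv.Perm (Pt n)) (1, permOf y.sigma i)).1 = -1
            then (1 : ZMod 2) else 0) := by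
    intro i
    rw [hσ i]
    have h := Hgrp_apply x.sigma.2 ((y.sigma : Equiv.Perm (Pt n)) (1, i)).1
      ((y.sigma : Equiv.Perm (Pt n)) (1, i)).2
    rw [Prod.mk.eta] at h
    rw [h]
    exact ite_units_mul _ _
  calc (∑ i : Fin n, if (((x * y).sigma : Equiv.Perm (Pt n)) (1, i)).1 = -1
          then (1 : ZMod 2) else 0)
      = ∑ i : Fin n, ((if ((y.sigma : Equiv.Perm (Pt n)) (1, i)).1 = -1 then (1 : ZMod 2) else 0)
        + (if ((x.sigma : Equiv.Perm (Pt n)) (1, permOf y.sigma i)).1 = -1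
            then (1 : ZMod 2) else 0)) := Finset.sum_congr rfl (fun i _ => step i)
    _ = (∑ i : Fin n, if ((y.sigma : Equiv.Perm (Pt n)) (1, i)).1 = -1 then (1 : ZMod 2) else 0)
        + ∑ i : Fin n, (if ((x.sigma : Equiv.Perm (Pt n)) (1, permOf y.sigma i)).1 = -1
            then (1 : ZMod 2) else 0) := Finset.sum_add_distrib
    _ = (∑ i : Fin n, if ((x.sigma : Equiv.Perm (Pt n)) (1, i)).1 = -1 then (1 : ZMod 2) else 0)
        + ∑ i : Fin n, (if ((y.sigma : Equiv.Perm (Pt n)) (1, i)).1 = -1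
            then (1 : ZMod 2) else 0) := by
          rw [add_comm]
          congr 1
          exact Equiv.sum_comp (permOf y.sigma)
            (fun k => if ((x.sigma : Equiv.Perm (Pt n)) (1, k)).1 = -1 then (1 : ZMod 2) else 0)
lemma even_int_iff_zmod {a : ℤ} : Even a ↔ ((a : ZMod 2) = 0) := by
  rw [ZMod.intCast_zmod_eq_zero_iff_dvd a 2, Int.even_iff]
  push_cast
  omega

lemma sumV_one {n : ℕ} : sumV (1 : WC n) = 0 := by simp [sumV]

/-- The affine Weyl group of type `B̃ₙ`: the elements `w` of `W(C̃ₙ)` with `Σw` even. -/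
def WB (n : ℕ) : Subgroup (WC n) where
  carrier := {w | Even (sumV w)}
  one_mem' := by
    show Even (sumV (1 : WC n))
    rw [sumV_one]
    exact ⟨0, by norm_num⟩
  mul_mem' := by
    intro a b ha hb
    have ha' : ((sumV a : ℤ) : ZMod 2) = 0 := even_int_iff_zmod.mp ha
    have hb' : ((sumV b : ℤ) : ZMod 2) = 0 := even_int_iff_zmod.mp hb
    refine even_int_iff_zmod.mpr ?_
    rw [sumV_mul, ha', hb', add_zero]
  inv_mem' := by
    intro a ha
    have ha' : ((sumV a : ℤ) : ZMod 2) = 0 := even_int_iff_zmod.mp ha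
    refine even_int_iff_zmod.mpr ?_
    have h1 := sumV_mul a⁻¹ a
    rw [inv_mul_cancel, sumV_one, ha', add_zero] at h1
    simpa using h1.symm

lemma intModEq_two_iff {a b : ℤ} : a ≡ b [ZMOD 2] ↔ ((a : ZMod 2) = (b : ZMod 2)) :=
  (ZMod.intCast_eq_intCast_iff a b 2).symm

/-- The second copy `B̄(B̃ₙ)` of the affine Weyl group of type `B̃ₙ` inside `W(C̃ₙ)`:
elements with `Σw ≡ minus(w) (mod 2)`. -/
def Bbar (n : ℕ) : Subgroup (WC n) where
  carrier := {w | sumV w ≡ (minusCard w : ℤ) [ZMOD 2]}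
  one_mem' := by
    show sumV (1 : WC n) ≡ ((minusCard (1 : WC n) : ℤ)) [ZMOD 2]
    rw [sumV_one, minusCard_one]
    rfl
  mul_mem' := by
    intro a b ha hb
    have ha' := intModEq_two_iff.mp ha
    have hb' := intModEq_two_iff.mp hb
    refine intModEq_two_iff.mpr ?_
    rw [sumV_mul, ha', hb']
    push_cast at ha' hb' ⊢
    rw [minusCard_mul]
  inv_mem' := by
    intro a ha
    have ha' := intModEq_two_iff.mp ha
    refine intModEq_two_iff.mpr ?_
    have h1 := sumV_mul a⁻¹ a
    have h2 := minusCard_mul a⁻¹ a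
    rw [inv_mul_cancel, sumV_one] at h1
    rw [inv_mul_cancel, minusCard_one] at h2
    push_cast at ha' h1 h2 ⊢
    linear_combination h1.symm - h2.symm - ha'

/-- The affine Weyl group of type `D̃ₙ`, as the intersection of the two `B̃ₙ`'s. -/
def WD (n : ℕ) : Subgroup (WC n) := WB n ⊓ Bbar n

instance : DecidablePred (fun k : ℤ => Even k) := fun _ => decidable_of_iff _ Int.even_iff.symm
instance : DecidablePred (fun k : ℤ => Odd k) := fun _ => decidable_of_iff _ Int.odd_iff.symm

/-- The labelled cycle type `(m, k_e, k_o, l)` of an element of `W(C̃ₙ)` (intended for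
involutions): `m` is the number of 2-cycles of `σ`, `k_e` (resp. `k_o`) is the number of
`i` with `σ(i) = -i` whose label `v_i` is even (resp. odd), and `l` is the number of fixed
points of `σ`. -/
def lct {n : ℕ} (x : WC n) : ℕ × ℕ × ℕ × ℕ :=
  ((Finset.univ.filter fun i : Fin n => ((x.sigma : Equiv.Perm (Pt n)) (1, i)).2 ≠ i).card / 2,
   (Finset.univ.filter fun i : Fin n =>
      (x.sigma : Equiv.Perm (Pt n)) (1, i) = (-1, i) ∧ Even (x.vec i)).card,
   (Finset.univ.filter fun i : Fin n =>
      (x.sigma : Equiv.Perm (Pt n)) (1, i) = (-1, i) ∧ Odd (x.vec i)).card,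
   (Finset.univ.filter fun i : Fin n => (x.sigma : Equiv.Perm (Pt n)) (1, i) = (1, i)).card)

/-- `f(x)`: twice the sum of the labels over one chosen entry of each 2-cycle (we choose the
entry with the smaller index), plus the sum of the labels over the negative 1-cycles.  Only
its residue modulo 4 is ever used, and for involutions that residue does not depend on the
choice of entries. -/
def fval {n : ℕ} (x : WC n) : ℤ :=
  2 * (∑ i ∈ Finset.univ.filter
        (fun i : Fin n => i < ((x.sigma : Equiv.Perm (Pt n)) (1, i)).2), x.vec i)
  + ∑ i ∈ Finset.univ.filter
      (fun i : Fin n => (x.sigma : Equiv.Perm (Pt n)) (1, i) = (-1, i)), x.vec i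

/-- The commuting graph on a set `X` of elements of a group: vertices are the elements
of `X`, and distinct vertices are adjacent exactly when they commute.  When `X` is a
conjugacy class of involutions this is the commuting involution graph `C(G,X)`. -/
def commGraph {M : Type*} [Group M] (X : Set M) : SimpleGraph X where
  Adj a b := a ≠ b ∧ (a : M) * (b : M) = (b : M) * (a : M)
  symm := ⟨fun a b h => ⟨h.1.symm, h.2.symm⟩⟩
  loopless := ⟨fun a h => h.1 rfl⟩

/-- The conjugacy class of `x` under conjugation by a subgroup `G`. -/
def ConjugacyClassOf {M : Type*} [Group M] (G : Subgroup M) (x : M) : Set M :=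
  {y | ∃ g ∈ G, g⁻¹ * x * g = y}

/-- `X` is a conjugacy class of involutions of the subgroup `G`. -/
def IsInvolutionConjClass {M : Type*} [Group M] (G : Subgroup M) (X : Set M) : Prop :=
  ∃ x ∈ G, orderOf x = 2 ∧ X = ConjugacyClassOf G x

/-- Sign change at the single coordinate `k`. -/
def negAt {n : ℕ} (k : Fin n) : Equiv.Perm (Pt n) :=
  Function.Involutive.toPerm (fun p => if p.2 = k then (-p.1, p.2) else p) (by
    intro p
    by_cases h : p.2 = k <;> simp [h, Prod.ext_iff])

lemma negAt_mem {n : ℕ} (k : Fin n) : negAt k ∈ Hgrp n := by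
  intro p
  show (if (negPt p).2 = k then (-(negPt p).1, (negPt p).2) else negPt p)
      = negPt (if p.2 = k then (-p.1, p.2) else p)
  by_cases h : p.2 = k <;> simp [negPt, h]

/-- The positive transposition of the coordinates `a` and `b`. -/
def swapPos {n : ℕ} (a b : Fin n) : Equiv.Perm (Pt n) :=
  Equiv.prodCongr (Equiv.refl ℤˣ) (Equiv.swap a b)

lemma swapPos_mem {n : ℕ} (a b : Fin n) : swapPos a b ∈ Hgrp n := fun _ => rfl

/-- The negative transposition of the coordinates `a` and `b` (for `a ≠ b` it sends
`a ↦ -b` and `b ↦ -a`). -/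
def negSwap {n : ℕ} (a b : Fin n) : Equiv.Perm (Pt n) := negAt b * negAt a * swapPos a b

lemma negSwap_mem {n : ℕ} (a b : Fin n) : negSwap a b ∈ Hgrp n :=
  mul_mem (mul_mem (negAt_mem b) (negAt_mem a)) (swapPos_mem a b)

/-- Constructor for elements of `W(C̃ₙ)`. -/
def mkW {n : ℕ} (σ : Equiv.Perm (Pt n)) (h : σ ∈ Hgrp n) (v : Fin n → ℤ) : WC n := ⟨⟨σ, h⟩, v⟩

/-- The simple reflection `r₁ = (σ, 0)` with `σ(1) = -1` (take `k = 0`); more generally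
`(σ, 0)` with `σ(k) = -k`. -/
def rFirstGen (n : ℕ) (k : Fin n) : WC n := mkW (negAt k) (negAt_mem k) 0

/-- The simple reflections `rᵢ = (σ, 0)`, `2 ≤ i ≤ n`, where `σ` exchanges `a` and `b`
positively (take `a, b` adjacent). -/
def swapGen (n : ℕ) (a b : Fin n) : WC n := mkW (swapPos a b) (swapPos_mem a b) 0

/-- The simple reflection `r_{n+1} = (σ, eₙ)` with `σ(n) = -n` (take `k = n-1`). -/
def rLastGen (n : ℕ) (k : Fin n) : WC n := mkW (negAt k) (negAt_mem k) (Pi.single k 1)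

/-- The reflections `s = (σ, e_{n-1} + eₙ)` (take `a = n-2`, `b = n-1`) and
`t = (σ, e₁ + e₂)` (take `a = 0`, `b = 1`), where `σ(a) = -b`, `σ(b) = -a`. -/
def negSwapGen (n : ℕ) (a b : Fin n) : WC n :=
  mkW (negSwap a b) (negSwap_mem a b) (Pi.single a 1 + Pi.single b 1)

/-- The projection `π : W(C̃ₙ) → Hₙ`, `(σ, v) ↦ σ`. -/
def projHom (n : ℕ) : WC n →* Equiv.Perm (Pt n) where
  toFun x := (x.sigma : Equiv.Perm (Pt n))
  map_one' := rfl
  map_mul' _ _ := rfl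

/-- The action of a signed permutation on real vectors. -/
def actR {n : ℕ} (σ : Equiv.Perm (Pt n)) (u : Fin n → ℝ) : Fin n → ℝ :=
  fun j => (((σ (1, j)).1 : ℤ) : ℝ) * u (σ (1, j)).2

/-- The affine action of `w = (σ,v) ∈ W(C̃ₙ)` on `ℝⁿ`: `u ↦ u^σ + v`. -/
def affAct {n : ℕ} (x : WC n) : (Fin n → ℝ) → (Fin n → ℝ) :=
  fun u => actR (x.sigma : Equiv.Perm (Pt n)) u + fun i => ((x.vec i : ℤ) : ℝ)

/-- The affine involution `φ` of `ℝⁿ` with `φ(u)ᵢ = 1/2 - u_{n+1-i}`. -/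
def phiR (n : ℕ) : (Fin n → ℝ) → (Fin n → ℝ) := fun u i => 1 / 2 - u i.rev

/-!
Write `g = (τ, 0) (1, u)`. For an involution `y` all of whose 1-cycles are negative with odd
label, conjugating by the signed permutation `τ` changes `f(y) + minus(y)` by `2 minus(τ)`
modulo 4, because `f` only sees the labels of 2-cycles modulo 2 and a sign flip turns an odd
label `v` into `v + 2`; conjugating by the translation `u` changes it by `2 Σu`. Hence
conjugation by `g` changes it by `2 (Σg + minus(g))`, which vanishes modulo 4 exactly when
`g ∈ B̄(B̃ₙ)`. Conversely, involutions with the same number of 2-cycles are conjugate in `Hₙ`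
after twisting signs along each 2-cycle, a translation then matches the labels, and the
condition modulo 4 forces the resulting conjugator into `B̄(B̃ₙ)`.
-/

section Involution

variable {α M : Type*} [Fintype α] [AddCommMonoid M] {s s' : α → α}

theorem sum_filter_fixed_comp_eq [DecidableEq α] {t : Perm α} (hst : ∀ i, s (t i) = t (s' i))
    (f : α → M) :
    ∑ i ∈ univ.filter (fun i => s' i = i), f (t i) = ∑ j ∈ univ.filter (fun j => s j = j), f j :=
  sum_equiv t (fun i => by simp [hst, t.injective.eq_iff]) fun _ _ => rfl

variable [LinearOrder α]

theorem sum_filter_ne_eq_sum_filter_lt (hs : Function.Involutive s) (f : α → M) :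
    ∑ i ∈ univ.filter (fun i => s i ≠ i), f i
      = ∑ i ∈ univ.filter (fun i => i < s i), (f i + f (s i)) := by
  have hlt : ∑ i ∈ univ.filter (fun i => i < s i), f (s i)
      = ∑ i ∈ univ.filter (fun i => s i < i), f i :=
    sum_nbij' s s (by simp [hs _]) (by simp [hs _]) (fun i _ => hs i) (fun i _ => hs i)
      (fun _ _ => rfl)
  rw [sum_add_distrib, hlt, ← sum_union]
  · refine sum_congr ?_ fun _ _ => rfl
    ext i
    simp only [mem_filter, mem_union, mem_univ, true_and]
    exact ne_iff_lt_or_gt.trans or_comm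
  · exact disjoint_filter.mpr fun i _ h h' => lt_asymm h h'

omit [Fintype α] in
theorem Function.Involutive.min_apply_lt_apply_min (hs : Function.Involutive s) {x : α}
    (hx : s x ≠ x) : min x (s x) < s (min x (s x)) := by
  rcases le_total x (s x) with h | h
  · rw [min_eq_left h]; exact lt_of_le_of_ne h hx.symm
  · rw [min_eq_right h, hs]; exact lt_of_le_of_ne h hx

omit [Fintype α] in
theorem Function.Involutive.min_apply_eq_of_eq_or_eq (hs : Function.Involutive s) {x y : α}
    (h : y = x ∨ y = s x) : min y (s y) = min x (s x) := by
  rcases h with rfl | rfl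
  · rfl
  · rw [hs, min_comm]

/-- Sums over the representatives `i < s i` of the 2-cycles of `s` do not depend on the
choice of representatives, hence are preserved by conjugation. -/
theorem sum_filter_lt_comp_eq (hs : Function.Involutive s) {t : Perm α}
    (hst : ∀ i, s (t i) = t (s' i)) {f : α → M} (hf : ∀ i, f (s i) = f i) :
    ∑ i ∈ univ.filter (fun i => i < s' i), f (t i)
      = ∑ j ∈ univ.filter (fun j => j < s j), f j := by
  have hs' : Function.Involutive s' := fun i => t.injective (by rw [← hst, ← hst, hs])
  have hts : ∀ j, s' (t.symm j) = t.symm (s j) := fun j =>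
    t.injective (by rw [← hst, Equiv.apply_symm_apply, Equiv.apply_symm_apply])
  refine sum_nbij' (fun i => min (t i) (s (t i)))
    (fun j => min (t.symm j) (s' (t.symm j))) ?_ ?_ ?_ ?_ ?_
  · intro i hi
    simp only [mem_filter, mem_univ, true_and] at hi ⊢
    refine hs.min_apply_lt_apply_min fun h => ?_
    rw [hst, t.injective.eq_iff] at h
    exact hi.ne' h
  · intro j hj
    simp only [mem_filter, mem_univ, true_and] at hj ⊢
    refine hs'.min_apply_lt_apply_min fun h => ?_
    rw [hts, t.symm.injective.eq_iff] at h
    exact hj.ne' h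
  · intro i hi
    simp only [mem_filter, mem_univ, true_and] at hi
    rw [hs'.min_apply_eq_of_eq_or_eq (x := i), min_eq_left hi.le]
    rcases min_choice (t i) (s (t i)) with h | h <;> rw [h] <;> simp [hst]
  · intro j hj
    simp only [mem_filter, mem_univ, true_and] at hj
    rw [hs.min_apply_eq_of_eq_or_eq (x := j), min_eq_left hj.le]
    rcases min_choice (t.symm j) (s' (t.symm j)) with h | h <;> rw [h] <;> simp [hts]
  · intro i _
    rcases min_choice (t i) (s (t i)) with h | h <;> simp only [h, hf]

end Involution

theorem exists_mul_eq_mul_apply_of_involutive {α : Type*} [LinearOrder α] {s : α → α}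
    (hs : Function.Involutive s) {a b : α → ℤˣ} (ha : ∀ i, a (s i) = a i)
    (hb : ∀ i, b (s i) = b i) (hab : ∀ i, s i = i → a i = b i) :
    ∃ ε : α → ℤˣ, ∀ i, ε i * a i = b i * ε (s i) := by
  refine ⟨fun i => if s i < i then a i * b i else 1, fun i => ?_⟩
  rcases lt_trichotomy (s i) i with h | h | h
  · have h' : ¬ s (s i) < s i := by rw [hs]; exact h.not_gt
    simp only [if_pos h, if_neg h']
    rw [mul_one, mul_right_comm, Int.units_mul_self, one_mul]
  · rw [h, hab i h, mul_comm]
  · have h' : s (s i) < s i := by rwa [hs]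
    simp only [if_neg h.not_gt, if_pos h', ha, hb]
    rw [one_mul, ← mul_assoc, mul_comm (b i), mul_assoc, Int.units_mul_self, mul_one]

theorem exists_sub_mul_apply_eq {α : Type*} [LinearOrder α] {s : α → α}
    (hs : Function.Involutive s) {η : α → ℤˣ} {d : α → ℤ} (hd : ∀ i, d (s i) = -η i * d i)
    (hfix : ∀ i, s i = i → η i = -1 ∧ Even (d i)) :
    ∃ u : α → ℤ, ∀ i, u i - η i * u (s i) = d i := by
  refine ⟨fun i => if s i = i then d i / 2 else if i < s i then d i else 0, fun i => ?_⟩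
  rcases lt_trichotomy i (s i) with h | h | h
  · simp [hs i, h, h.ne, h.ne', h.not_gt]
  · obtain ⟨hη, k, hk⟩ := hfix i h.symm
    simp only [← h, hη, hk]
    push_cast
    omega
  · simp only [hs i, h, h.ne, h.ne', h.not_gt, hd, if_false, if_true]
    linear_combination d i * Int.units_coe_mul_self (η i)

theorem Equiv.Perm.cycleType_eq_replicate_of_mul_self {α : Type*} [Fintype α] [DecidableEq α]
    {s : Perm α} (hs : s * s = 1) : s.cycleType = Multiset.replicate (#s.support / 2) 2 := by
  have h := cycleType_of_pow_prime_eq_one (p := 2) (by rwa [sq])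
  have hsum := s.sum_cycleType
  rw [h, Multiset.sum_replicate, smul_eq_mul] at hsum
  rw [h, ← hsum, Nat.mul_div_cancel _ two_pos]

theorem Equiv.Perm.isConj_of_mul_self_of_card_support_eq {α : Type*} [Fintype α]
    [DecidableEq α] {s s' : Perm α} (hs : s * s = 1) (hs' : s' * s' = 1)
    (h : #s.support = #s'.support) : IsConj s s' := by
  rw [isConj_iff_cycleType_eq, cycleType_eq_replicate_of_mul_self hs,
    cycleType_eq_replicate_of_mul_self hs', h]

theorem mul_self_conj_eq_one {G : Type*} [Group G] {y : G} (hy : y * y = 1) (g : G) :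
    (g⁻¹ * y * g) * (g⁻¹ * y * g) = 1 := by
  rw [show (g⁻¹ * y * g) * (g⁻¹ * y * g) = g⁻¹ * (y * y) * g by group, hy]
  group

namespace ZMod

theorem two_mul_intCast_eq_zero_iff (a : ℤ) : (2 : ZMod 4) * a = 0 ↔ Even a := by
  rw [← Int.cast_ofNat, ← Int.cast_mul, ZMod.intCast_zmod_eq_zero_iff_dvd, even_iff_two_dvd]
  omega

theorem two_mul_units_cast (ε : ℤˣ) : (2 : ZMod 4) * (ε : ℤ) = 2 := by
  rcases Int.units_eq_one_or ε with rfl | rfl <;> decide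

theorem one_sub_units_mul_cast (a b : ℤˣ) :
    (1 : ZMod 4) - ((a * b : ℤˣ) : ℤ) = (1 - (a : ℤ)) + (1 - (b : ℤ)) := by
  rcases Int.units_eq_one_or a with rfl | rfl <;>
    rcases Int.units_eq_one_or b with rfl | rfl <;> decide

theorem units_mul_cast_of_odd (ε : ℤˣ) {a : ℤ} (ha : Odd a) :
    ((ε : ℤ) : ZMod 4) * a = a + (1 - (ε : ℤ)) := by
  obtain ⟨k, rfl⟩ := ha
  rcases Int.units_eq_one_or ε with rfl | rfl
  · simp
  · have h4 : (4 : ZMod 4) = 0 := by decide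
    push_cast
    linear_combination (-(k : ZMod 4) - 1) * h4

theorem two_mul_ite_eq_neg_one (ε : ℤˣ) :
    (2 : ZMod 4) * (if ε = -1 then 1 else 0) = 1 - (ε : ℤ) := by
  rcases Int.units_eq_one_or ε with rfl | rfl <;> decide

theorem two_mul_card_filter_eq_neg_one {α : Type*} [Fintype α] (ε : α → ℤˣ) :
    (2 : ZMod 4) * #(univ.filter fun i => ε i = -1) = ∑ i, (1 - ((ε i : ℤ) : ZMod 4)) := by
  rw [natCast_card_filter, mul_sum]
  exact sum_congr rfl fun i _ => two_mul_ite_eq_neg_one (ε i)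

end ZMod

section SignedPerm

variable {n : ℕ}

def signAt (σ : Hgrp n) (i : Fin n) : ℤˣ := ((σ : Perm (Pt n)) (1, i)).1

theorem Hgrp.apply_eq (σ : Hgrp n) (δ : ℤˣ) (i : Fin n) :
    (σ : Perm (Pt n)) (δ, i) = (δ * signAt σ i, permOf σ i) :=
  Hgrp_apply σ.2 δ i

theorem Hgrp.apply_one_eq_iff (σ : Hgrp n) (i j : Fin n) (δ : ℤˣ) :
    (σ : Perm (Pt n)) (1, i) = (δ, j) ↔ signAt σ i = δ ∧ permOf σ i = j :=
  Prod.mk.injEq _ _ _ _ ▸ Iff.rfl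

theorem actV_apply (σ : Hgrp n) (v : Fin n → ℤ) (i : Fin n) :
    actV (σ : Perm (Pt n)) v i = signAt σ i * v (permOf σ i) :=
  rfl

theorem permOf_one : permOf (1 : Hgrp n) = 1 :=
  Equiv.ext fun _ => rfl

theorem signAt_one (i : Fin n) : signAt 1 i = 1 :=
  rfl

theorem permOf_mul (σ τ : Hgrp n) : permOf (σ * τ) = permOf σ * permOf τ := by
  refine Equiv.ext fun i => ?_
  change ((σ : Perm (Pt n)) ((τ : Perm (Pt n)) (1, i))).2 = _
  rw [Hgrp.apply_eq τ, Hgrp.apply_eq]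
  rfl

theorem permOf_inv (σ : Hgrp n) : permOf σ⁻¹ = (permOf σ)⁻¹ :=
  map_inv (MonoidHom.mk' permOf permOf_mul) σ

theorem signAt_mul (σ τ : Hgrp n) (i : Fin n) :
    signAt (σ * τ) i = signAt τ i * signAt σ (permOf τ i) := by
  change ((σ : Perm (Pt n)) ((τ : Perm (Pt n)) (1, i))).1 = _
  rw [Hgrp.apply_eq τ, Hgrp.apply_eq, one_mul]

theorem Hgrp.ext_permOf_signAt {σ τ : Hgrp n} (hp : permOf σ = permOf τ)
    (hs : signAt σ = signAt τ) : σ = τ := by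
  refine Subtype.ext (Equiv.ext fun ⟨δ, i⟩ => ?_)
  rw [Hgrp.apply_eq, Hgrp.apply_eq, hp, hs]

theorem permOf_involutive {σ : Hgrp n} (hσ : σ * σ = 1) : Function.Involutive (permOf σ) :=
  fun i => by rw [← Perm.mul_apply, ← permOf_mul, hσ, permOf_one, Perm.one_apply]

theorem signAt_permOf {σ : Hgrp n} (hσ : σ * σ = 1) (i : Fin n) :
    signAt σ (permOf σ i) = signAt σ i := by
  have h := signAt_mul σ σ i
  rw [hσ, signAt_one] at h
  rw [← one_mul (signAt σ (permOf σ i)), ← Int.units_mul_self (signAt σ i), mul_assoc, ← h,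
    mul_one]

theorem permOf_apply_of_mul_eq {σ τ σ' : Hgrp n} (h : σ * τ = τ * σ') (i : Fin n) :
    permOf σ (permOf τ i) = permOf τ (permOf σ' i) := by
  simpa [permOf_mul] using congrArg (fun x => permOf x i) h

theorem signAt_of_mul_eq {σ τ σ' : Hgrp n} (h : σ * τ = τ * σ') (i : Fin n) :
    signAt τ i * signAt σ (permOf τ i) = signAt σ' i * signAt τ (permOf σ' i) := by
  simpa [signAt_mul] using congrFun (congrArg signAt h) i

/-- The signed permutation `(δ, i) ↦ (δ * ε i, t i)`. -/
def signedPerm (t : Perm (Fin n)) (ε : Fin n → ℤˣ) : Hgrp n :=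
  ⟨(Function.Involutive.toPerm (fun p : Pt n => (p.1 * ε p.2, p.2))
      fun p => by simp [mul_assoc, Int.units_mul_self]).trans (Equiv.prodCongr (Equiv.refl _) t),
    fun p => Prod.ext (neg_mul _ _) rfl⟩

theorem permOf_signedPerm (t : Perm (Fin n)) (ε : Fin n → ℤˣ) :
    permOf (signedPerm t ε) = t :=
  Equiv.ext fun _ => rfl

theorem signAt_signedPerm (t : Perm (Fin n)) (ε : Fin n → ℤˣ) :
    signAt (signedPerm t ε) = ε :=
  funext fun _ => one_mul _

theorem exists_mul_eq_mul_of_card_support_eq {σ σ' : Hgrp n} (hσ : σ * σ = 1)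
    (hσ' : σ' * σ' = 1) (hfix : ∀ i, permOf σ i = i → signAt σ i = -1)
    (hfix' : ∀ i, permOf σ' i = i → signAt σ' i = -1)
    (hcard : #(permOf σ).support = #(permOf σ').support) :
    ∃ τ : Hgrp n, σ * τ = τ * σ' := by
  have hs : permOf σ * permOf σ = 1 := by rw [← permOf_mul, hσ, permOf_one]
  have hs' : permOf σ' * permOf σ' = 1 := by rw [← permOf_mul, hσ', permOf_one]
  obtain ⟨c, hc⟩ := isConj_iff.mp (Perm.isConj_of_mul_self_of_card_support_eq hs hs' hcard)
  have hst : ∀ i, permOf σ (c⁻¹ i) = c⁻¹ (permOf σ' i) := fun i => by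
    rw [← hc]; simp
  obtain ⟨ε, hε⟩ := exists_mul_eq_mul_apply_of_involutive (permOf_involutive hσ')
    (a := fun i => signAt σ (c⁻¹ i)) (b := signAt σ')
    (fun i => by simp only [← hst, signAt_permOf hσ]) (signAt_permOf hσ')
    fun i hi => by rw [hfix' i hi, hfix _ (by rw [hst, hi])]
  refine ⟨signedPerm c⁻¹ ε, Hgrp.ext_permOf_signAt ?_ (funext fun i => ?_)⟩
  · rw [permOf_mul, permOf_mul, permOf_signedPerm]
    exact Equiv.ext hst
  · rw [signAt_mul, signAt_mul, signAt_signedPerm, permOf_signedPerm]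
    exact hε i

end SignedPerm

namespace WC

variable {n : ℕ}

theorem sigma_mul_self {y : WC n} (hy : y * y = 1) : y.sigma * y.sigma = 1 :=
  congrArg sigma hy

theorem vec_permOf {y : WC n} (hy : y * y = 1) (i : Fin n) :
    y.vec (permOf y.sigma i) = -signAt y.sigma i * y.vec i := by
  have h := congrFun (congrArg vec hy) i
  simp only [mul_vec, Pi.add_apply, actV_apply, one_vec, Pi.zero_apply] at h
  linear_combination (signAt y.sigma i : ℤ) * h
    - y.vec (permOf y.sigma i) * Int.units_coe_mul_self (signAt y.sigma i)

theorem mk_eq_mul (τ : Hgrp n) (u : Fin n → ℤ) : WC.mk τ u = WC.mk τ 0 * WC.mk 1 u := by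
  ext : 1
  · exact (mul_one τ).symm
  · exact (congrArg (· + u) (actV_zero _)).trans (zero_add u) |>.symm

theorem conj_mk_one (y : WC n) (u : Fin n → ℤ) :
    (WC.mk 1 u)⁻¹ * y * WC.mk 1 u = ⟨y.sigma, y.vec + u - actV y.sigma u⟩ := by
  ext : 1
  · simp
  · funext i
    simp only [mul_vec, inv_vec, inv_one, Subgroup.coe_one, actV_one,
      actV_neg, Pi.add_apply, Pi.neg_apply, Pi.sub_apply]
    ring

theorem conj_mk_zero (y : WC n) (τ : Hgrp n) :
    (WC.mk τ 0)⁻¹ * y * WC.mk τ 0 = ⟨τ⁻¹ * y.sigma * τ, actV τ y.vec⟩ := by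
  ext : 1
  · simp
  · simp [actV_zero]

/-- For an involution this says `k_e = l = 0` in its labelled cycle type. -/
def OneCyclesNegOdd (y : WC n) : Prop :=
  ∀ i, permOf y.sigma i = i → signAt y.sigma i = -1 ∧ Odd (y.vec i)

theorem OneCyclesNegOdd.of_lct {y : WC n} {m ko : ℕ} (h : lct y = (m, 0, ko, 0)) :
    OneCyclesNegOdd y := by
  simp only [lct, Prod.mk.injEq, card_eq_zero, filter_eq_empty_iff, mem_univ, true_implies,
    Hgrp.apply_one_eq_iff] at h
  obtain ⟨-, heven, -, hpos⟩ := h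
  intro i hi
  have hneg : signAt y.sigma i = -1 :=
    (Int.units_eq_one_or _).resolve_left fun h1 => hpos ⟨h1, hi⟩
  exact ⟨hneg, Int.not_even_iff_odd.mp fun hev => heven ⟨⟨hneg, hi⟩, hev⟩⟩

theorem OneCyclesNegOdd.lct_eq {y : WC n} (h : OneCyclesNegOdd y) :
    lct y = (#(permOf y.sigma).support / 2, 0, n - #(permOf y.sigma).support, 0) := by
  have hfixed : ∀ i, (y.sigma : Perm (Pt n)) (1, i) = (-1, i) ↔ permOf y.sigma i = i :=
    fun i => (Hgrp.apply_one_eq_iff _ _ _ _).trans ⟨And.right, fun hi => ⟨(h i hi).1, hi⟩⟩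
  simp only [lct, hfixed, Prod.mk.injEq]
  refine ⟨rfl, ?_, ?_, ?_⟩
  · rw [card_eq_zero, filter_eq_empty_iff]
    exact fun i _ hi => Int.not_even_iff_odd.mpr (h i hi.1).2 hi.2
  · rw [filter_congr fun i _ => and_iff_left_of_imp fun hi => (h i hi).2]
    have hsplit := card_filter_add_card_filter_not (s := univ) fun i => permOf y.sigma i = i
    rw [card_univ, Fintype.card_fin] at hsplit
    exact Nat.eq_sub_of_add_eq hsplit
  · rw [card_eq_zero, filter_eq_empty_iff]
    intro i _ hi
    rw [Hgrp.apply_one_eq_iff] at hi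
    exact absurd ((h i hi.2).1.symm.trans hi.1) (by decide)

theorem OneCyclesNegOdd.conj {y : WC n} (h : OneCyclesNegOdd y) {τ σ' : Hgrp n}
    (hτ : y.sigma * τ = τ * σ') : OneCyclesNegOdd ⟨σ', actV τ y.vec⟩ := by
  intro i hi
  have hfix : permOf y.sigma (permOf τ i) = permOf τ i := by
    rw [permOf_apply_of_mul_eq hτ, hi]
  obtain ⟨hneg, hodd⟩ := h _ hfix
  have hsign := signAt_of_mul_eq hτ i
  rw [hneg, hi, mul_comm] at hsign
  refine ⟨(mul_right_cancel hsign).symm, ?_⟩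
  change Odd (actV τ y.vec i)
  rw [actV_apply]
  rcases Int.units_eq_one_or (signAt τ i) with h1 | h1 <;> simpa [h1] using hodd

def fvalAddMinus (y : WC n) : ZMod 4 := ((fval y + minusCard y : ℤ) : ZMod 4)

theorem fvalAddMinus_eq_iff_modEq (y y' : WC n) : fvalAddMinus y = fvalAddMinus y' ↔
    fval y + (minusCard y : ℤ) ≡ fval y' + (minusCard y' : ℤ) [ZMOD 4] :=
  ZMod.intCast_eq_intCast_iff _ _ 4

theorem minusCard_eq (y : WC n) :
    minusCard y = #(univ.filter fun i => signAt y.sigma i = -1) :=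
  rfl

/-- The contribution of the 2-cycle through `i` to `fvalAddMinus`: `2 v_i` from `f`, and
`1 - ε` (which is `2` or `0` in `ZMod 4` as `ε = -1` or `1`) from its two entries in `minus`. -/
def pairWeight (y : WC n) (i : Fin n) : ZMod 4 :=
  2 * (y.vec i : ZMod 4) + 1 - (signAt y.sigma i : ℤ)

theorem pairWeight_permOf {y : WC n} (hy : y * y = 1) (i : Fin n) :
    pairWeight y (permOf y.sigma i) = pairWeight y i := by
  have h4 : (4 : ZMod 4) = 0 := by decide
  rw [pairWeight, pairWeight, vec_permOf hy, signAt_permOf (sigma_mul_self hy)]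
  push_cast
  linear_combination (-(y.vec i : ZMod 4)) * ZMod.two_mul_units_cast _ - (y.vec i : ZMod 4) * h4

theorem pairWeight_conj {y : WC n} {τ σ' : Hgrp n} (hτ : y.sigma * τ = τ * σ') (i : Fin n) :
    pairWeight ⟨σ', actV τ y.vec⟩ i = pairWeight y (permOf τ i)
      + ((1 - (signAt τ i : ℤ)) + (1 - (signAt τ (permOf σ' i) : ℤ))) := by
  have hsign : signAt σ' i
      = signAt τ i * signAt y.sigma (permOf τ i) * signAt τ (permOf σ' i) := by
    rw [signAt_of_mul_eq hτ, mul_assoc, Int.units_mul_self, mul_one]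
  have h1 := ZMod.one_sub_units_mul_cast (signAt τ i * signAt y.sigma (permOf τ i))
    (signAt τ (permOf σ' i))
  have h2 := ZMod.one_sub_units_mul_cast (signAt τ i) (signAt y.sigma (permOf τ i))
  rw [pairWeight, pairWeight]
  dsimp only
  rw [actV_apply, hsign]
  push_cast at h1 h2 ⊢
  linear_combination h1 + h2 + (y.vec (permOf τ i) : ZMod 4) * ZMod.two_mul_units_cast _

theorem fvalAddMinus_eq {y : WC n} (hy : y * y = 1)
    (hfix : ∀ i, permOf y.sigma i = i → signAt y.sigma i = -1) :
    fvalAddMinus y = ∑ i ∈ univ.filter (fun i => i < permOf y.sigma i), pairWeight y i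
      + ∑ i ∈ univ.filter (fun i => permOf y.sigma i = i), ((y.vec i : ZMod 4) + 1) := by
  have hs := permOf_involutive (sigma_mul_self hy)
  have hfixed : ∀ i, (y.sigma : Perm (Pt n)) (1, i) = (-1, i) ↔ permOf y.sigma i = i :=
    fun i => (Hgrp.apply_one_eq_iff _ _ _ _).trans ⟨And.right, fun hi => ⟨hfix i hi, hi⟩⟩
  have hminus : (minusCard y : ZMod 4) = #(univ.filter fun i => permOf y.sigma i = i)
      + ∑ i ∈ univ.filter (fun i => i < permOf y.sigma i), (1 - (signAt y.sigma i : ZMod 4)) := by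
    rw [minusCard_eq, natCast_card_filter,
      ← sum_filter_add_sum_filter_not univ fun i => permOf y.sigma i = i,
      sum_filter_ne_eq_sum_filter_lt hs]
    congr 1
    · rw [sum_congr rfl fun i hi => if_pos (hfix i (mem_filter.mp hi).2), sum_const, nsmul_one]
    · refine sum_congr rfl fun i _ => ?_
      rw [signAt_permOf (sigma_mul_self hy), ← two_mul, ZMod.two_mul_ite_eq_neg_one]
  have hfval : fval y = 2 * ∑ i ∈ univ.filter (fun i => i < permOf y.sigma i), y.vec i
      + ∑ i ∈ univ.filter (fun i => permOf y.sigma i = i), y.vec i := by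
    simp only [fval, hfixed]
    rfl
  rw [fvalAddMinus, Int.cast_add, hfval]
  push_cast
  rw [hminus]
  simp only [pairWeight, sum_add_distrib, sum_sub_distrib, mul_sum, sum_const, nsmul_eq_mul,
    mul_one]
  ring

theorem fvalAddMinus_conj_mk_one {y : WC n} (hy : y * y = 1)
    (hfix : ∀ i, permOf y.sigma i = i → signAt y.sigma i = -1) (u : Fin n → ℤ) :
    fvalAddMinus ((WC.mk 1 u)⁻¹ * y * WC.mk 1 u) = fvalAddMinus y + 2 * ∑ i, (u i : ZMod 4) := by
  have hy' := mul_self_conj_eq_one hy (WC.mk 1 u)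
  rw [conj_mk_one] at hy' ⊢
  rw [fvalAddMinus_eq hy' hfix, fvalAddMinus_eq hy hfix]
  dsimp only
  have h4 : (4 : ZMod 4) = 0 := by decide
  have hpair : ∀ i, pairWeight ⟨y.sigma, y.vec + u - actV y.sigma u⟩ i
      = pairWeight y i + 2 * ((u i : ZMod 4) + u (permOf y.sigma i)) := fun i => by
    simp only [pairWeight, Pi.add_apply, Pi.sub_apply, actV_apply]
    push_cast
    linear_combination (-(u (permOf y.sigma i) : ZMod 4)) * ZMod.two_mul_units_cast _
      - (u (permOf y.sigma i) : ZMod 4) * h4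
  have hfixed : ∀ i ∈ univ.filter (fun i => permOf y.sigma i = i),
      (((y.vec + u - actV y.sigma u) i : ℤ) : ZMod 4) + 1 = ((y.vec i : ZMod 4) + 1) + 2 * u i := by
    intro i hi
    have hi := (mem_filter.mp hi).2
    simp only [Pi.add_apply, Pi.sub_apply, actV_apply, hi, hfix i hi]
    push_cast
    ring
  rw [sum_congr rfl fun i _ => hpair i, sum_congr rfl hfixed, sum_add_distrib, sum_add_distrib,
    ← mul_sum, ← mul_sum, ← sum_filter_ne_eq_sum_filter_lt (permOf_involutive (sigma_mul_self hy)),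
    ← sum_filter_add_sum_filter_not univ fun i => permOf y.sigma i = i]
  ring

theorem fvalAddMinus_conj_mk_zero {y : WC n} (hy : y * y = 1) (h : OneCyclesNegOdd y)
    (τ : Hgrp n) :
    fvalAddMinus ((WC.mk τ 0)⁻¹ * y * WC.mk τ 0)
      = fvalAddMinus y + ∑ i, (1 - ((signAt τ i : ℤ) : ZMod 4)) := by
  have hτ : y.sigma * τ = τ * (τ⁻¹ * y.sigma * τ) := by group
  have hy' := mul_self_conj_eq_one hy (WC.mk τ 0)
  rw [conj_mk_zero] at hy' ⊢
  have h' := h.conj hτ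
  rw [fvalAddMinus_eq hy' fun i hi => (h' i hi).1, fvalAddMinus_eq hy fun i hi => (h i hi).1]
  dsimp only
  generalize τ⁻¹ * y.sigma * τ = σ' at hτ hy' h' ⊢
  have hs := permOf_involutive (sigma_mul_self hy)
  have hs' := permOf_involutive (sigma_mul_self hy')
  have hst := permOf_apply_of_mul_eq hτ
  have hfixed : ∀ i ∈ univ.filter (fun i => permOf σ' i = i),
      ((actV τ y.vec i : ℤ) : ZMod 4) + 1
        = ((y.vec (permOf τ i) : ZMod 4) + 1) + (1 - (signAt τ i : ℤ)) := by
    intro i hi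
    have hodd := (h _ (by rw [hst, (mem_filter.mp hi).2])).2
    rw [actV_apply, Int.cast_mul, ZMod.units_mul_cast_of_odd _ hodd]
    ring
  have hlt := sum_filter_lt_comp_eq hs hst (pairWeight_permOf hy)
  have hne := sum_filter_ne_eq_sum_filter_lt hs' fun i => 1 - ((signAt τ i : ℤ) : ZMod 4)
  have hfix := sum_filter_fixed_comp_eq hst fun j => (y.vec j : ZMod 4) + 1
  have hall := sum_filter_add_sum_filter_not univ (fun i => permOf σ' i = i)
    fun i => 1 - ((signAt τ i : ℤ) : ZMod 4)
  rw [sum_congr rfl fun i _ => pairWeight_conj hτ i, sum_congr rfl hfixed]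
  simp only [sum_add_distrib, ne_eq] at hne hfix ⊢
  linear_combination hlt + hfix - hne + hall

theorem fvalAddMinus_conj {y : WC n} (hy : y * y = 1) (h : OneCyclesNegOdd y) (g : WC n) :
    fvalAddMinus (g⁻¹ * y * g)
      = fvalAddMinus y + 2 * ((sumV g + minusCard g : ℤ) : ZMod 4) := by
  obtain ⟨τ, u⟩ := g
  have hτ : y.sigma * τ = τ * (τ⁻¹ * y.sigma * τ) := by group
  have hy₁ := mul_self_conj_eq_one hy (WC.mk τ 0)
  have hfix₁ : ∀ i, permOf ((WC.mk τ 0)⁻¹ * y * WC.mk τ 0).sigma i = i →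
      signAt ((WC.mk τ 0)⁻¹ * y * WC.mk τ 0).sigma i = -1 := by
    rw [conj_mk_zero]
    exact fun i hi => (h.conj hτ i hi).1
  rw [mk_eq_mul τ u, show (WC.mk τ 0 * WC.mk 1 u)⁻¹ * y * (WC.mk τ 0 * WC.mk 1 u)
      = (WC.mk 1 u)⁻¹ * ((WC.mk τ 0)⁻¹ * y * WC.mk τ 0) * WC.mk 1 u by group,
    fvalAddMinus_conj_mk_one hy₁ hfix₁, fvalAddMinus_conj_mk_zero hy h, ← mk_eq_mul]
  push_cast
  rw [mul_add, minusCard_eq, ZMod.two_mul_card_filter_eq_neg_one]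
  simp only [sumV, Int.cast_sum]
  ring

theorem mem_Bbar_iff_two_mul_eq_zero (g : WC n) :
    g ∈ Bbar n ↔ 2 * ((sumV g + minusCard g : ℤ) : ZMod 4) = 0 := by
  rw [ZMod.two_mul_intCast_eq_zero_iff, even_iff_two_dvd]
  exact Int.modEq_iff_dvd.trans (by omega)

theorem card_support_permOf_conj (y g : WC n) :
    #(permOf (g⁻¹ * y * g).sigma).support = #(permOf y.sigma).support := by
  simpa [permOf_mul, permOf_inv] using Perm.card_support_conj (σ := (permOf g.sigma)⁻¹)

theorem exists_conj_mk_one_eq {y y' : WC n} (hy : y * y = 1) (hy' : y' * y' = 1)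
    (hσ : y.sigma = y'.sigma) (h : OneCyclesNegOdd y) (h' : OneCyclesNegOdd y') :
    ∃ u, (WC.mk 1 u)⁻¹ * y * WC.mk 1 u = y' := by
  have hv' := vec_permOf hy'
  rw [← hσ] at hv'
  obtain ⟨u, hu⟩ := exists_sub_mul_apply_eq (permOf_involutive (sigma_mul_self hy))
    (d := y'.vec - y.vec) (fun i => by simp only [Pi.sub_apply, hv', vec_permOf hy]; ring)
    fun i hi => ⟨(h i hi).1, (h' i (by rwa [← hσ])).2.sub_odd (h i hi).2⟩
  refine ⟨u, ?_⟩
  rw [conj_mk_one]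
  refine WC.ext hσ (funext fun i => ?_)
  have hi := hu i
  simp only [Pi.add_apply, Pi.sub_apply, actV_apply] at hi ⊢
  linarith

theorem exists_conj_eq_of_card_support_eq {y y' : WC n} (hy : y * y = 1) (hy' : y' * y' = 1)
    (h : OneCyclesNegOdd y) (h' : OneCyclesNegOdd y')
    (hcard : #(permOf y.sigma).support = #(permOf y'.sigma).support) :
    ∃ g : WC n, g⁻¹ * y * g = y' := by
  obtain ⟨τ, hτ⟩ := exists_mul_eq_mul_of_card_support_eq (sigma_mul_self hy)
    (sigma_mul_self hy') (fun i hi => (h i hi).1) (fun i hi => (h' i hi).1) hcard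
  have hσ : τ⁻¹ * y.sigma * τ = y'.sigma := by rw [mul_assoc, hτ, inv_mul_cancel_left]
  have hy₁ := mul_self_conj_eq_one hy (WC.mk τ 0)
  rw [conj_mk_zero, hσ] at hy₁
  obtain ⟨u, hu⟩ := exists_conj_mk_one_eq hy₁ hy' rfl (h.conj hτ) h'
  refine ⟨WC.mk τ 0 * WC.mk 1 u, ?_⟩
  rw [← hu, ← hσ, ← conj_mk_zero]
  group

end WC

open WC in
theorem Bbar_conjugacy_lct_f_general (n : ℕ) (y y' : WC n)
    (h2 : orderOf y = 2) (h2' : orderOf y' = 2)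
    (hty : ∃ m ko, lct y = (m, 0, ko, 0)) (hty' : ∃ m ko, lct y' = (m, 0, ko, 0)) :
    (∃ g ∈ Bbar n, g⁻¹ * y * g = y') ↔
      (lct y = lct y' ∧
        fval y + (minusCard y : ℤ) ≡ fval y' + (minusCard y' : ℤ) [ZMOD 4]) := by
  have hy : y * y = 1 := by rw [← sq, ← h2, pow_orderOf_eq_one]
  have hy' : y' * y' = 1 := by rw [← sq, ← h2', pow_orderOf_eq_one]
  obtain ⟨m, ko, hl⟩ := hty
  obtain ⟨m', ko', hl'⟩ := hty'
  have h := OneCyclesNegOdd.of_lct hl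
  have h' := OneCyclesNegOdd.of_lct hl'
  rw [h.lct_eq, h'.lct_eq, ← fvalAddMinus_eq_iff_modEq]
  constructor
  · rintro ⟨g, hg, rfl⟩
    rw [card_support_permOf_conj, fvalAddMinus_conj hy h, (mem_Bbar_iff_two_mul_eq_zero g).mp hg,
      add_zero]
    exact ⟨rfl, rfl⟩
  · rintro ⟨hlct, hf⟩
    have hcard : #(permOf y.sigma).support = #(permOf y'.sigma).support := by
      have hle := card_le_univ (permOf y.sigma).support
      have hle' := card_le_univ (permOf y'.sigma).support
      simp only [Prod.mk.injEq, Fintype.card_fin] at hlct hle hle'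
      omega
    obtain ⟨g, rfl⟩ := exists_conj_eq_of_card_support_eq hy hy' h h' hcard
    refine ⟨g, (mem_Bbar_iff_two_mul_eq_zero g).mpr ?_, rfl⟩
    rwa [fvalAddMinus_conj hy h, left_eq_add] at hf

theorem Bbar_conjugacy_lct_f (n : ℕ) (y y' : WC n) (hy : y ∈ Bbar n) (hy' : y' ∈ Bbar n)
    (h2 : orderOf y = 2) (h2' : orderOf y' = 2)
    (hty : ∃ m ko, lct y = (m, 0, ko, 0)) (hty' : ∃ m ko, lct y' = (m, 0, ko, 0)) :
    (∃ g ∈ Bbar n, g⁻¹ * y * g = y') ↔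
      (lct y = lct y' ∧
        fval y + (minusCard y : ℤ) ≡ fval y' + (minusCard y' : ℤ) [ZMOD 4]) :=
  Bbar_conjugacy_lct_f_general n y y' h2 h2' hty hty'
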